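/- arXiv:cs/0606038 — 4 statements merged into one kernel-verified Lean document; each statement's English description precedes it below -/
import Mathlib

section
/- Let X : Fin n → ℝ be a vector in W, and let σ be a permutation of Fin n such that X ∘ σ is strictly monotone. Then σ is permissible, i.e., for every i : Fin n, (σ i : ℕ) is even if and only if (i : ℕ) is even. -/
/-- The rank of `z : ℝ` with respect to a vector `X : Fin n → ℝ` is the
number of indices `i` with `X i ≤ z`. -/
noncomputable def rank {n : ℕ} (X : Fin n → ℝ) (z : ℝ) : ℕ :=
  (Finset.univ.filter (fun i : Fin n => X i ≤ z)).card

/-- `W` is the set of injective vectors whose odd-ranked entries are exactly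
those at even (0-based) indices. -/
def W (n : ℕ) : Set (Fin n → ℝ) :=
  {X | Function.Injective X ∧ ∀ i : Fin n, Odd (rank X (X i)) ↔ Even ((i : ℕ))}

/-- If `X ∈ W` and `σ` sorts `X` (i.e. `X ∘ σ` is strictly monotone),
then `σ` is permissible. -/
theorem sorting_perm_permissible {n : ℕ} (X : Fin n → ℝ) (hX : X ∈ W n)
    (σ : Equiv.Perm (Fin n)) (hσ : StrictMono (X ∘ σ)) :
    ∀ i : Fin n, Even ((σ i : ℕ)) ↔ Even ((i : ℕ)) := by
  intro i
  obtain ⟨hinj, hrank⟩ := hX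
  have hle : ∀ a b : Fin n, X (σ a) ≤ X (σ b) ↔ a ≤ b := fun a b => hσ.le_iff_le
  have hr : rank X (X (σ i)) = (i : ℕ) + 1 := by
    have hset : Finset.univ.filter (fun j : Fin n => X j ≤ X (σ i)) =
        Finset.image σ (Finset.Iic i) := by
      ext j
      simp only [Finset.mem_filter, Finset.mem_image, Finset.mem_univ, true_and,
        Finset.mem_Iic]
      constructor
      · intro h
        refine ⟨σ.symm j, ?_, σ.apply_symm_apply j⟩
        rw [← hle]
        simpa using h
      · rintro ⟨k, hk, rfl⟩
        exact (hle k i).2 hk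
    rw [rank, hset, Finset.card_image_of_injective _ σ.injective]
    simp
  have h1 := hrank (σ i)
  rw [hr] at h1
  rw [← h1, Nat.odd_add_one]; exact Nat.not_odd_iff_even
end

section
/- Let n = 2m with m ≥ 1, let X ∈ W, and let σ be the sorting permutation of X (so X ∘ σ is strictly monotone). Then the connected component of X inside W (for the subspace topology) is exactly the set R_σ = { A : Fin n → ℝ | A ∘ σ is strictly monotone }; in particular R_σ ⊆ W and R_σ is a maximal connected subset of W containing X. -/
lemma rank_eq_of_strictMono {n : ℕ} {A : Fin n → ℝ} {σ : Equiv.Perm (Fin n)}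
    (h : StrictMono (A ∘ σ)) (i : Fin n) :
    rank A (A i) = (σ.symm i : ℕ) + 1 := by
  have key : ∀ j : Fin n, A j ≤ A i ↔ σ.symm j ≤ σ.symm i := by
    intro j
    have := h.le_iff_le (a := σ.symm j) (b := σ.symm i)
    simpa using this
  have himg : (Finset.univ.filter fun j : Fin n => A j ≤ A i)
      = Finset.image σ (Finset.Iic (σ.symm i)) := by
    ext j
    simp only [Finset.mem_filter, Finset.mem_univ, true_and, Finset.mem_image,
      Finset.mem_Iic, key]
    constructor
    · intro hj; exact ⟨σ.symm j, hj, by simp⟩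
    · rintro ⟨k, hk, rfl⟩; simpa using hk
  rw [rank, himg, Finset.card_image_of_injective _ σ.injective, Fin.card_Iic]

lemma injective_of_strictMono_comp {n : ℕ} {A : Fin n → ℝ} {σ : Equiv.Perm (Fin n)}
    (h : StrictMono (A ∘ σ)) : Function.Injective A := by
  have : A = (A ∘ σ) ∘ σ.symm := by ext x; simp
  rw [this]
  exact h.injective.comp σ.symm.injective

lemma perm_eq_of_strictMono {n : ℕ} {A : Fin n → ℝ} {σ τ : Equiv.Perm (Fin n)}
    (hσ : StrictMono (A ∘ σ)) (hτ : StrictMono (A ∘ τ)) : τ = σ := by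
  have he : StrictMono (τ.trans σ.symm : Fin n → Fin n) := by
    intro a b hab
    have h1 : A (τ a) < A (τ b) := hτ hab
    have := hσ.lt_iff_lt (a := σ.symm (τ a)) (b := σ.symm (τ b))
    simp only [Function.comp_apply, Equiv.apply_symm_apply] at this
    exact this.mp h1
  have hiso : (StrictMono.orderIsoOfSurjective _ he (τ.trans σ.symm).surjective)
      = OrderIso.refl (Fin n) := Subsingleton.elim _ _
  apply Equiv.ext; intro x
  have := congrArg (fun f : Fin n ≃o Fin n => f x) hiso
  simp only [StrictMono.coe_orderIsoOfSurjective, OrderIso.refl_apply] at this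
  have : σ.symm (τ x) = x := this
  calc τ x = σ (σ.symm (τ x)) := by simp
  _ = σ x := by rw [this]

lemma region_isOpen {n : ℕ} (τ : Equiv.Perm (Fin n)) :
    IsOpen {A : Fin n → ℝ | StrictMono (A ∘ τ)} := by
  have h : {A : Fin n → ℝ | StrictMono (A ∘ τ)} =
      ⋂ (i : Fin n), ⋂ (j : Fin n),
        {A : Fin n → ℝ | i < j → A (τ i) < A (τ j)} := by
    ext A
    simp only [Set.mem_setOf_eq, Set.mem_iInter]
    exact ⟨fun h i j hij => h hij, fun h a b hab => h a b hab⟩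
  rw [h]
  refine isOpen_iInter_of_finite fun i => isOpen_iInter_of_finite fun j => ?_
  by_cases hij : i < j
  · simp only [hij, forall_true_left]
    exact isOpen_lt (continuous_apply (τ i)) (continuous_apply (τ j))
  · simp only [hij, IsEmpty.forall_iff]
    simpa using isOpen_univ
lemma region_convex {n : ℕ} (τ : Equiv.Perm (Fin n)) :
    Convex ℝ {A : Fin n → ℝ | StrictMono (A ∘ τ)} := by
  intro A hA B hB a b ha hb hab
  intro i j hij
  have h1 : A (τ i) < A (τ j) := hA hij
  have h2 : B (τ i) < B (τ j) := hB hij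
  simp only [Function.comp_apply, Pi.add_apply, Pi.smul_apply, smul_eq_mul]
  rcases lt_or_eq_of_le ha with ha' | ha'
  · have := mul_lt_mul_of_pos_left h1 ha'
    have h2' := mul_le_mul_of_nonneg_left h2.le hb
    linarith
  · have hb' : b = 1 := by linarith
    rw [← ha', hb']; simpa using h2

/-- For `n = 2m`, `m ≥ 1`: if `X ∈ W` is sorted by `σ`, then the connected
component of `X` in `W` (subspace topology) is exactly
`R_σ = { A | A ∘ σ is strictly monotone }`. -/
theorem connectedComponentIn_eq_sorted_region (m : ℕ) (hm : 1 ≤ m)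
    (X : Fin (2 * m) → ℝ) (hX : X ∈ W (2 * m)) (σ : Equiv.Perm (Fin (2 * m)))
    (hσ : StrictMono (X ∘ σ)) :
    connectedComponentIn (W (2 * m)) X
      = {A : Fin (2 * m) → ℝ | StrictMono (A ∘ σ)} := by
  -- σ preserves parity
  have hpar : ∀ k : Fin (2*m), Even ((σ k : ℕ)) ↔ Even (k : ℕ) := by
    intro k
    have h1 := hX.2 (σ k)
    rw [rank_eq_of_strictMono hσ (σ k)] at h1
    simp only [Equiv.symm_apply_apply] at h1
    rw [← h1, Nat.odd_add_one, Nat.not_odd_iff_even]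
  -- R_σ ⊆ W
  have hRW : {A : Fin (2*m) → ℝ | StrictMono (A ∘ σ)} ⊆ W (2*m) := by
    intro A hA
    refine ⟨injective_of_strictMono_comp hA, fun i => ?_⟩
    rw [rank_eq_of_strictMono hA i, Nat.odd_add_one, Nat.not_odd_iff_even]
    have := hpar (σ.symm i)
    simp only [Equiv.apply_symm_apply] at this
    rw [this]
  apply Set.Subset.antisymm
  · -- component ⊆ R_σ
    set U : Set (Fin (2*m) → ℝ) :=
      ⋃ (τ : Equiv.Perm (Fin (2*m))) (_ : τ ≠ σ), {A : Fin (2*m) → ℝ | StrictMono (A ∘ τ)} with hU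
    have hUopen : IsOpen U := isOpen_iUnion fun τ => isOpen_iUnion fun _ => region_isOpen τ
    have hdisj : {A : Fin (2*m) → ℝ | StrictMono (A ∘ σ)} ∩ U = ∅ := by
      ext A
      simp only [Set.mem_inter_iff, Set.mem_setOf_eq, Set.mem_empty_iff_false, iff_false,
        not_and, hU, Set.mem_iUnion]
      rintro hA ⟨τ, hτ, hAτ⟩
      exact hτ (perm_eq_of_strictMono hA hAτ)
    have hcover : W (2*m) ⊆ {A : Fin (2*m) → ℝ | StrictMono (A ∘ σ)} ∪ U := by
      intro Y hY
      have hinj : Function.Injective (Y ∘ Tuple.sort Y) :=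
        hY.1.comp (Tuple.sort Y).injective
      have hsm : StrictMono (Y ∘ Tuple.sort Y) :=
        (Tuple.monotone_sort Y).strictMono_of_injective hinj
      by_cases h : Tuple.sort Y = σ
      · left; rw [← h]; exact hsm
      · right; rw [hU]; simp only [Set.mem_iUnion]; exact ⟨Tuple.sort Y, h, hsm⟩
    have hC : IsPreconnected (connectedComponentIn (W (2*m)) X) :=
      isPreconnected_connectedComponentIn
    have hCW : connectedComponentIn (W (2*m)) X ⊆ W (2*m) := connectedComponentIn_subset _ _
    by_contra hcon
    rw [Set.subset_def] at hcon
    push_neg at hcon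
    obtain ⟨Y, hYC, hYc⟩ := hcon
    have hYU : Y ∈ U := by
      rcases hcover (hCW hYC) with h | h
      · exact absurd h hYc
      · exact h
    have := hC {A : Fin (2*m) → ℝ | StrictMono (A ∘ σ)} U (region_isOpen σ) hUopen
      (fun z hz => hcover (hCW hz))
      ⟨X, mem_connectedComponentIn hX, hσ⟩ ⟨Y, hYC, hYU⟩
    obtain ⟨z, hz1, hz2⟩ := this
    rw [Set.mem_inter_iff] at hz2
    have : z ∈ ({A : Fin (2*m) → ℝ | StrictMono (A ∘ σ)} ∩ U) := hz2
    rw [hdisj] at this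
    exact this
  · exact ((region_convex σ).isPreconnected).subset_connectedComponentIn hσ hRW
end

section
/- Let n = 2m with m ≥ 1. The set W, with the subspace topology induced from Fin n → ℝ, has exactly (m!)² connected components; that is, the cardinality of the set of connected components of the topological space W equals ((n/2)!)². -/
namespace WAux

open Equiv Finset

variable {n : ℕ}

/-- A permutation is good if it preserves parity of indices. -/
def Good (σ : Equiv.Perm (Fin n)) : Prop := ∀ i, (Even ((σ i : ℕ)) ↔ Even ((i : ℕ)))

/-- The cell of a permutation. -/
def C (σ : Equiv.Perm (Fin n)) : Set (Fin n → ℝ) :=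
  {X | ∀ i j, σ i < σ j → X i < X j}

lemma rank_eq_of_mem_C {σ : Equiv.Perm (Fin n)} {X : Fin n → ℝ} (hX : X ∈ C σ) (i : Fin n) :
    rank X (X i) = (σ i : ℕ) + 1 := by
  have hiff : ∀ j, X j ≤ X i ↔ σ j ≤ σ i := by
    intro j
    constructor
    · intro h
      by_contra hc
      push_neg at hc
      exact absurd (hX i j hc) (not_lt.mpr h)
    · intro h
      rcases lt_or_eq_of_le h with h | h
      · exact le_of_lt (hX j i h)
      · have : j = i := σ.injective h
        simp [this]
  have h1 : (Finset.univ.filter (fun j : Fin n => X j ≤ X i)) =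
      (Finset.univ.filter (fun j : Fin n => σ j ≤ σ i)) := by
    apply Finset.filter_congr
    intro j _
    simpa using hiff j
  have h2 : (Finset.univ.filter (fun j : Fin n => σ j ≤ σ i)).card =
      (Finset.Iic (σ i)).card := by
    apply Finset.card_bij (fun j _ => σ j)
    · intro a ha; simpa using (Finset.mem_filter.mp ha).2
    · intro a _ b _ h; exact σ.injective h
    · intro b hb
      refine ⟨σ.symm b, ?_, by simp⟩
      simp only [Finset.mem_filter, Finset.mem_univ, true_and, Equiv.apply_symm_apply]
      simpa using hb
  rw [rank, h1, h2, Fin.card_Iic]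

lemma mem_C_unique {σ τ : Equiv.Perm (Fin n)} {X : Fin n → ℝ}
    (hσ : X ∈ C σ) (hτ : X ∈ C τ) : σ = τ := by
  ext i
  have := (rank_eq_of_mem_C hσ i).symm.trans (rank_eq_of_mem_C hτ i)
  omega

lemma injective_of_mem_C {σ : Equiv.Perm (Fin n)} {X : Fin n → ℝ} (hX : X ∈ C σ) :
    Function.Injective X := by
  intro i j h
  by_contra hc
  rcases lt_or_gt_of_ne (fun he : σ i = σ j => hc (σ.injective he)) with h' | h'
  · exact absurd h (ne_of_lt (hX i j h'))
  · exact absurd h.symm (ne_of_lt (hX j i h'))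

lemma C_subset_W {σ : Equiv.Perm (Fin n)} (hσ : Good σ) : C σ ⊆ W n := by
  intro X hX
  refine ⟨injective_of_mem_C hX, fun i => ?_⟩
  rw [rank_eq_of_mem_C hX i, Nat.odd_add_one, Nat.not_odd_iff_even]
  exact hσ i

lemma rank_lt_rank {X : Fin n → ℝ} {i j : Fin n} (h : X i < X j) :
    rank X (X i) < rank X (X j) := by
  apply Finset.card_lt_card
  rw [Finset.ssubset_iff_of_subset]
  · exact ⟨j, by simp, by simpa using h⟩
  · intro a ha
    simp only [Finset.mem_filter, Finset.mem_univ, true_and] at ha ⊢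
    exact le_of_lt (lt_of_le_of_lt ha h)

lemma exists_good_of_mem_W {X : Fin n → ℝ} (hX : X ∈ W n) :
    ∃ σ : Equiv.Perm (Fin n), Good σ ∧ X ∈ C σ := by
  obtain ⟨hinj, hpar⟩ := hX
  have hrank_pos : ∀ i, 1 ≤ rank X (X i) := by
    intro i
    refine Finset.card_pos.mpr ⟨i, by simp⟩
  have hrank_lt : ∀ i, rank X (X i) - 1 < n := by
    intro i
    have : rank X (X i) ≤ n := by
      refine le_trans (Finset.card_filter_le _ _) (by simp)
    have := hrank_pos i
    have hn : 0 < n := lt_of_lt_of_le (by omega) ‹rank X (X i) ≤ n›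
    omega
  set f : Fin n → Fin n := fun i => ⟨rank X (X i) - 1, hrank_lt i⟩ with hf
  have hfinj : Function.Injective f := by
    intro i j h
    by_contra hc
    have hne : X i ≠ X j := fun he => hc (hinj he)
    have : rank X (X i) = rank X (X j) := by
      have := Fin.mk.injEq (rank X (X i) - 1) (hrank_lt i) (rank X (X j) - 1) (hrank_lt j)
      have h1 := hrank_pos i; have h2 := hrank_pos j
      have := congrArg Fin.val h
      simp only [hf] at this
      omega
    rcases lt_or_gt_of_ne hne with h' | h'
    · exact absurd this (ne_of_lt (rank_lt_rank h'))
    · exact absurd this.symm (ne_of_lt (rank_lt_rank h'))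
  let σ : Equiv.Perm (Fin n) := Equiv.ofBijective f (Finite.injective_iff_bijective.mp hfinj)
  have hσ : ∀ i, (σ i : ℕ) = rank X (X i) - 1 := fun i => rfl
  have hmem : X ∈ C σ := by
    intro i j hlt
    rcases lt_trichotomy (X i) (X j) with h | h | h
    · exact h
    · exact absurd (hinj h) (fun he => absurd (he ▸ hlt) (lt_irrefl _))
    · have := rank_lt_rank h
      have h1 := hrank_pos i; have h2 := hrank_pos j
      rw [Fin.lt_def, hσ i, hσ j] at hlt
      omega
  refine ⟨σ, fun i => ?_, hmem⟩
  have := rank_eq_of_mem_C hmem i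
  have hp := hpar i
  rw [this, Nat.odd_add_one, Nat.not_odd_iff_even] at hp
  exact hp

lemma isOpen_C (σ : Equiv.Perm (Fin n)) : IsOpen (C σ) := by
  have : C σ = ⋂ (i : Fin n), ⋂ (j : Fin n), ⋂ (_ : σ i < σ j), {X : Fin n → ℝ | X i < X j} := by
    ext X; simp [C, Set.mem_iInter]
  rw [this]
  exact isOpen_iInter_of_finite fun i => isOpen_iInter_of_finite fun j =>
    isOpen_iInter_of_finite fun _ => isOpen_lt (continuous_apply i) (continuous_apply j)

lemma convex_C (σ : Equiv.Perm (Fin n)) : Convex ℝ (C σ) := by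
  have : C σ = ⋂ (i : Fin n), ⋂ (j : Fin n), ⋂ (_ : σ i < σ j), {X : Fin n → ℝ | X i < X j} := by
    ext X; simp [C, Set.mem_iInter]
  rw [this]
  refine convex_iInter fun i => convex_iInter fun j => convex_iInter fun _ => ?_
  have heq : {X : Fin n → ℝ | X i < X j} =
      ((LinearMap.proj j : (Fin n → ℝ) →ₗ[ℝ] ℝ) - (LinearMap.proj i : (Fin n → ℝ) →ₗ[ℝ] ℝ)) ⁻¹' Set.Ioi 0 := by
    ext X
    simp [sub_pos]
  rw [heq]
  exact (convex_Ioi (0 : ℝ)).linear_preimage _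

lemma basepoint_mem_C (σ : Equiv.Perm (Fin n)) : (fun i => ((σ i : ℕ) : ℝ)) ∈ C σ := by
  intro i j h
  exact_mod_cast Nat.cast_lt.mpr h

lemma basepoint_mem_W {σ : Equiv.Perm (Fin n)} (hσ : Good σ) :
    (fun i => ((σ i : ℕ) : ℝ)) ∈ W n :=
  C_subset_W hσ (basepoint_mem_C σ)

/-- The equivalence between parity-preserving permutations and pairs of
permutations of evens and odds. -/
def goodEquiv (n : ℕ) :
    {σ : Equiv.Perm (Fin n) // Good σ} ≃
      Equiv.Perm {i : Fin n // Even ((i : ℕ))} × Equiv.Perm {i : Fin n // ¬ Even ((i : ℕ))} where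
  toFun σ := (σ.1.subtypePerm (fun i => σ.2 i),
    σ.1.subtypePerm (fun i => not_congr (σ.2 i)))
  invFun x := ⟨Equiv.Perm.subtypeCongr x.1 x.2, by
    intro i
    by_cases h : Even ((i : ℕ))
    · rw [Equiv.Perm.subtypeCongr.left_apply x.1 x.2 h]
      simp only [h, iff_true]
      exact (x.1 ⟨i, h⟩).2
    · rw [Equiv.Perm.subtypeCongr.right_apply x.1 x.2 h]
      have := (x.2 ⟨i, h⟩).2
      simp only [h, iff_false]
      simpa using this⟩
  left_inv := by
    rintro ⟨σ, hσ⟩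
    apply Subtype.ext
    apply Equiv.ext
    intro i
    simp only [Equiv.Perm.subtypeCongr.apply]
    split_ifs with h <;> rfl
  right_inv := by
    rintro ⟨a, b⟩
    refine Prod.ext ?_ ?_
    · apply Equiv.ext
      rintro ⟨i, h⟩
      apply Subtype.ext
      simp [Equiv.Perm.subtypeCongr.apply, h]
    · apply Equiv.ext
      rintro ⟨i, h⟩
      apply Subtype.ext
      simp [Equiv.Perm.subtypeCongr.apply, h]

/-- Even indices of `Fin (2*m)` biject with `Fin m`. -/
def evenEquiv (m : ℕ) : Fin m ≃ {i : Fin (2 * m) // Even ((i : ℕ))} where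
  toFun k := ⟨⟨2 * (k : ℕ), by omega⟩, by show Even (2 * (k : ℕ)); exact ⟨(k : ℕ), by omega⟩⟩
  invFun i := ⟨(i : ℕ) / 2, by have := (i : Fin (2 * m)).isLt; omega⟩
  left_inv k := by
    apply Fin.ext
    simp
  right_inv i := by
    apply Subtype.ext
    apply Fin.ext
    have h := i.2
    rw [Nat.even_iff] at h
    simp only []
    omega
  
/-- Odd indices of `Fin (2*m)` biject with `Fin m`. -/
def oddEquiv (m : ℕ) : Fin m ≃ {i : Fin (2 * m) // ¬ Even ((i : ℕ))} where
  toFun k := ⟨⟨2 * (k : ℕ) + 1, by omega⟩, by simp [Nat.even_iff]⟩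
  invFun i := ⟨(i : ℕ) / 2, by have := (i : Fin (2 * m)).isLt; omega⟩
  left_inv k := by
    apply Fin.ext
    simp
    omega
  right_inv i := by
    apply Subtype.ext
    apply Fin.ext
    have h := i.2
    rw [Nat.even_iff] at h
    simp only []
    omega

lemma card_goodPerm (m : ℕ) :
    Nat.card {σ : Equiv.Perm (Fin (2 * m)) // Good σ} = (Nat.factorial m) ^ 2 := by
  rw [Nat.card_congr (goodEquiv (2 * m)), Nat.card_prod]
  have h1 : Nat.card (Equiv.Perm {i : Fin (2 * m) // Even ((i : ℕ))}) = Nat.factorial m := by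
    rw [Nat.card_eq_fintype_card, Fintype.card_perm, Fintype.card_congr (evenEquiv m).symm,
      Fintype.card_fin]
  have h2 : Nat.card (Equiv.Perm {i : Fin (2 * m) // ¬ Even ((i : ℕ))}) = Nat.factorial m := by
    rw [Nat.card_eq_fintype_card, Fintype.card_perm, Fintype.card_congr (oddEquiv m).symm,
      Fintype.card_fin]
  rw [h1, h2, sq]

instance : TopologicalSpace {σ : Equiv.Perm (Fin n) // Good σ} := ⊥
instance : DiscreteTopology {σ : Equiv.Perm (Fin n) // Good σ} := ⟨rfl⟩

/-- The locally constant map sending a point of `W` to its order permutation. -/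
noncomputable def phi (x : W n) : {σ : Equiv.Perm (Fin n) // Good σ} :=
  ⟨(exists_good_of_mem_W x.2).choose, (exists_good_of_mem_W x.2).choose_spec.1⟩

lemma phi_spec (x : W n) : (x : Fin n → ℝ) ∈ C (phi x).1 :=
  (exists_good_of_mem_W x.2).choose_spec.2

lemma phi_eq {x : W n} {σ : Equiv.Perm (Fin n)} (h : (x : Fin n → ℝ) ∈ C σ) (hg : Good σ) :
    phi x = ⟨σ, hg⟩ :=
  Subtype.ext (mem_C_unique (phi_spec x) h)

lemma fiber_phi (σ : {σ : Equiv.Perm (Fin n) // Good σ}) :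
    phi ⁻¹' {σ} = (Subtype.val : W n → (Fin n → ℝ)) ⁻¹' (C σ.1) := by
  ext x
  simp only [Set.mem_preimage, Set.mem_singleton_iff]
  constructor
  · rintro rfl
    exact phi_spec x
  · intro h
    exact phi_eq h σ.2

lemma continuous_phi : Continuous (phi (n := n)) := by
  rw [continuous_def]
  intro s _
  have hs : phi ⁻¹' s = ⋃ σ ∈ s, phi ⁻¹' {σ} := by
    ext x; simp
  rw [hs]
  exact isOpen_biUnion fun σ _ => (fiber_phi σ) ▸ (isOpen_C σ.1).preimage continuous_subtype_val

lemma bijective_lift :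
    Function.Bijective (continuous_phi (n := n)).connectedComponentsLift := by
  constructor
  · intro a b hab
    obtain ⟨x, rfl⟩ := ConnectedComponents.surjective_coe a
    obtain ⟨y, rfl⟩ := ConnectedComponents.surjective_coe b
    rw [Continuous.connectedComponentsLift_apply_coe, Continuous.connectedComponentsLift_apply_coe]
      at hab
    have hx : (x : Fin n → ℝ) ∈ C (phi x).1 := phi_spec x
    have hy : (y : Fin n → ℝ) ∈ C (phi x).1 := by
      rw [hab]; exact phi_spec y
    have himg : Subtype.val '' ((Subtype.val : W n → (Fin n → ℝ)) ⁻¹' (C (phi x).1))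
        = C (phi x).1 := by
      rw [Set.image_preimage_eq_inter_range, Subtype.range_coe,
        Set.inter_eq_left.mpr (C_subset_W (phi x).2)]
    have hpre : IsPreconnected ((Subtype.val : W n → (Fin n → ℝ)) ⁻¹' (C (phi x).1)) := by
      rw [← Topology.IsInducing.subtypeVal.isPreconnected_image, himg]
      exact (convex_C (phi x).1).isPreconnected
    have hy' : y ∈ connectedComponent x :=
      hpre.subset_connectedComponent (by exact hx) (by exact hy)
    exact (ConnectedComponents.coe_eq_coe' ).mpr (connectedComponent_eq hy' ▸ mem_connectedComponent)
  · intro σ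
    refine ⟨((⟨(fun i => ((σ.1 i : ℕ) : ℝ)), basepoint_mem_W σ.2⟩ : W n) : ConnectedComponents (W n)), ?_⟩
    rw [Continuous.connectedComponentsLift_apply_coe]
    exact phi_eq (basepoint_mem_C σ.1) σ.2

end WAux

/-- For `n = 2m`, `m ≥ 1`, the set `W` (with the subspace topology from
`Fin n → ℝ`) has exactly `(m!)²` connected components. -/
theorem num_connected_components_W (m : ℕ) (hm : 1 ≤ m) :
    Nat.card (ConnectedComponents (W (2 * m))) = (Nat.factorial m) ^ 2 := by
  rw [Nat.card_congr (Equiv.ofBijective _ (WAux.bijective_lift (n := 2 * m)))]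
  exact WAux.card_goodPerm m
end

section
/- The map sending a connected component of W to the sorting permutation σ_X of any of its points X is a well-defined bijection between the set of connected components of W and the set of permissible permutations of Fin n. -/
/-- A permutation `σ` of `Fin n` is *permissible* if for every index `i`,
`σ i` is even (as a natural number) iff `i` is even. -/
def Permissible {n : ℕ} (σ : Equiv.Perm (Fin n)) : Prop :=
  ∀ i : Fin n, Even ((σ i : ℕ)) ↔ Even ((i : ℕ))

namespace ComponentsProof

variable {n : ℕ}

/-- The open convex "chamber" of vectors sorted by `σ`. -/
def S (σ : Equiv.Perm (Fin n)) : Set (Fin n → ℝ) := {X | StrictMono (X ∘ σ)}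

lemma isOpen_S (σ : Equiv.Perm (Fin n)) : IsOpen (S σ) := by
  have h : S σ = ⋂ i, ⋂ j, {X : Fin n → ℝ | i < j → X (σ i) < X (σ j)} := by
    ext X
    simp only [S, Set.mem_setOf_eq, Set.mem_iInter]
    exact ⟨fun h i j hij => h hij, fun h a b hab => h a b hab⟩
  rw [h]
  refine isOpen_iInter_of_finite fun i => isOpen_iInter_of_finite fun j => ?_
  by_cases hij : i < j
  · have : {X : Fin n → ℝ | i < j → X (σ i) < X (σ j)}
        = {X : Fin n → ℝ | X (σ i) < X (σ j)} := by
      ext X; simp [hij]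
    rw [this]
    exact isOpen_lt (continuous_apply (σ i)) (continuous_apply (σ j))
  · have : {X : Fin n → ℝ | i < j → X (σ i) < X (σ j)} = Set.univ := by
      ext X; simp [hij]
    rw [this]; exact isOpen_univ

lemma convex_S (σ : Equiv.Perm (Fin n)) : Convex ℝ (S σ) := by
  intro X hX Y hY a b ha hb hab
  intro i j hij
  have h1 : X (σ i) < X (σ j) := hX hij
  have h2 : Y (σ i) < Y (σ j) := hY hij
  simp only [Function.comp_apply, Pi.add_apply, Pi.smul_apply, smul_eq_mul]
  rcases eq_or_lt_of_le ha with ha0 | ha0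
  · have hb1 : b = 1 := by linarith
    subst hb1; rw [← ha0]; simpa using h2
  · exact add_lt_add_of_lt_of_le (mul_lt_mul_of_pos_left h1 ha0)
      (mul_le_mul_of_nonneg_left h2.le hb)

lemma injective_of_mem_S {X : Fin n → ℝ} {σ : Equiv.Perm (Fin n)} (h : X ∈ S σ) :
    Function.Injective X :=
  (Equiv.injective_comp σ X).mp h.injective

lemma sort_unique {X : Fin n → ℝ} {σ τ : Equiv.Perm (Fin n)}
    (hσ : X ∈ S σ) (hτ : X ∈ S τ) : σ = τ := by
  have hinj : Function.Injective X := injective_of_mem_S hσ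
  have hσ' : StrictMono (X ∘ σ) := hσ
  have hτ' : StrictMono (X ∘ τ) := hτ
  have heq : (X ∘ σ) = (X ∘ τ) := Tuple.unique_monotone hσ'.monotone hτ'.monotone
  exact Equiv.ext fun i => hinj (congrFun heq i)

lemma rank_sorted {X : Fin n → ℝ} {σ : Equiv.Perm (Fin n)} (h : X ∈ S σ) (k : Fin n) :
    rank X (X (σ k)) = (k : ℕ) + 1 := by
  have hkey : ∀ i : Fin n, X i ≤ X (σ k) ↔ σ.symm i ≤ k := by
    intro i
    have : X i = (X ∘ σ) (σ.symm i) := by simp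
    rw [this]
    exact h.le_iff_le
  unfold rank
  have hcard : (Finset.univ.filter fun i : Fin n => X i ≤ X (σ k)).card
      = (Finset.univ.filter fun m : Fin n => m ≤ k).card := by
    apply Finset.card_bij (fun i _ => σ.symm i)
    · intro i hi
      simp only [Finset.mem_filter, Finset.mem_univ, true_and] at hi ⊢
      exact (hkey i).mp hi
    · intro i _ j _ hij
      exact σ.symm.injective hij
    · intro m hm
      simp only [Finset.mem_filter, Finset.mem_univ, true_and] at hm
      refine ⟨σ m, ?_, by simp⟩
      simp only [Finset.mem_filter, Finset.mem_univ, true_and]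
      exact (hkey (σ m)).mpr (by simpa using hm)
  rw [hcard]
  have : (Finset.univ.filter fun m : Fin n => m ≤ k) = Finset.Iic k := by
    ext m; simp
  rw [this, Fin.card_Iic]

lemma mem_W_iff {X : Fin n → ℝ} :
    X ∈ W n ↔ ∃ σ : Equiv.Perm (Fin n), Permissible σ ∧ X ∈ S σ := by
  constructor
  · rintro ⟨hinj, hrank⟩
    refine ⟨Tuple.sort X, ?_, ?_⟩
    · -- permissibility
      have hs : X ∈ S (Tuple.sort X) :=
        (Tuple.monotone_sort X).strictMono_of_injective (hinj.comp (Tuple.sort X).injective)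
      intro i
      have h1 := hrank (Tuple.sort X i)
      rw [rank_sorted hs i] at h1
      rw [← h1, Nat.odd_add_one, Nat.not_odd_iff_even]
    · exact (Tuple.monotone_sort X).strictMono_of_injective
        (hinj.comp (Tuple.sort X).injective)
  · rintro ⟨σ, hperm, hs⟩
    refine ⟨injective_of_mem_S hs, fun i => ?_⟩
    have h1 : X i = X (σ (σ.symm i)) := by simp
    rw [h1, rank_sorted hs (σ.symm i), Nat.odd_add_one, Nat.not_odd_iff_even]
    have := hperm (σ.symm i)
    simpa using this.symm

lemma S_subset_W {σ : Equiv.Perm (Fin n)} (hperm : Permissible σ) : S σ ⊆ W n :=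
  fun _ hs => mem_W_iff.mpr ⟨σ, hperm, hs⟩

/-- The sorting permutation of a point of `W`. -/
noncomputable def g (X : W n) : {σ : Equiv.Perm (Fin n) // Permissible σ} :=
  ⟨(mem_W_iff.mp X.2).choose, (mem_W_iff.mp X.2).choose_spec.1⟩

lemma mem_S_g (X : W n) : (X : Fin n → ℝ) ∈ S (g X : Equiv.Perm (Fin n)) :=
  (mem_W_iff.mp X.2).choose_spec.2

lemma g_eq_of_mem_S (X : W n) {σ : Equiv.Perm (Fin n)}
    (h : (X : Fin n → ℝ) ∈ S σ) : (g X : Equiv.Perm (Fin n)) = σ :=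
  sort_unique (mem_S_g X) h

/-- The chamber inside the subtype `W n`. -/
def T (σ : Equiv.Perm (Fin n)) : Set (W n) := Subtype.val ⁻¹' S σ

lemma isOpen_T (σ : Equiv.Perm (Fin n)) : IsOpen (T σ) :=
  (isOpen_S σ).preimage continuous_subtype_val

lemma isPreconnected_T {σ : Equiv.Perm (Fin n)} (hperm : Permissible σ) :
    IsPreconnected (T σ) := by
  have h1 : IsPreconnected (S σ ∩ W n) := by
    rw [Set.inter_eq_left.mpr (S_subset_W hperm)]
    exact (convex_S σ).isPreconnected
  have h2 : (Subtype.val : W n → (Fin n → ℝ)) '' (T σ) = S σ ∩ W n := by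
    rw [T, Subtype.image_preimage_coe, Set.inter_comm]
  exact Topology.IsInducing.subtypeVal.isPreconnected_image.mp (h2 ▸ h1)

lemma isClopen_T (σ : Equiv.Perm (Fin n)) : IsClopen (T σ) := by
  refine ⟨?_, isOpen_T σ⟩
  have hcompl : (T σ)ᶜ = ⋃ τ ∈ {τ : Equiv.Perm (Fin n) | τ ≠ σ}, T τ := by
    ext Y
    simp only [Set.mem_compl_iff, Set.mem_iUnion, Set.mem_setOf_eq]
    constructor
    · intro hY
      obtain ⟨τ, _, hτ⟩ := mem_W_iff.mp Y.2
      exact ⟨τ, fun h => hY (h ▸ hτ), hτ⟩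
    · rintro ⟨τ, hne, hτ⟩ hY
      exact hne (sort_unique hτ hY)
  rw [← isOpen_compl_iff, hcompl]
  exact isOpen_biUnion fun τ _ => isOpen_T τ

lemma g_const_on_component {X Y : W n} (h : Y ∈ connectedComponent X) : g Y = g X := by
  have hsub : connectedComponent X ⊆ T (g X : Equiv.Perm (Fin n)) :=
    (isClopen_T _).connectedComponent_subset (mem_S_g X)
  exact Subtype.ext (g_eq_of_mem_S Y (hsub h))

end ComponentsProof

open ComponentsProof in
/-- The map sending a connected component of `W` to the sorting permutation of
any of its points is a well-defined bijection onto the set of permissible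
permutations: there is a bijection `f` from the connected components of `W`
to the permissible permutations such that, for any point `X ∈ W` and any
permutation `σ` sorting `X`, the component of `X` is mapped to `σ`. -/
theorem components_equiv_permissible (n : ℕ) :
    ∃ f : ConnectedComponents (W n) → {σ : Equiv.Perm (Fin n) // Permissible σ},
      Function.Bijective f ∧
        ∀ (X : W n) (σ : Equiv.Perm (Fin n)),
          StrictMono ((X : Fin n → ℝ) ∘ σ) →
            (f (ConnectedComponents.mk X) : Equiv.Perm (Fin n)) = σ := by
  have hg : ∀ a b : W n, (connectedComponentSetoid (W n)).r a b → g a = g b := by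
    intro a b hab
    have : b ∈ connectedComponent a := by
      have h : connectedComponent a = connectedComponent b := hab
      rw [h]; exact mem_connectedComponent
    exact (g_const_on_component this).symm
  refine ⟨fun c => Quotient.liftOn' c g hg, ⟨?_, ?_⟩, ?_⟩
  · -- injective
    intro a b
    refine Quotient.inductionOn₂' a b fun X Y h => ?_
    have h' : g X = g Y := h
    have hYX : (Y : Fin n → ℝ) ∈ S (g X : Equiv.Perm (Fin n)) := by
      have := mem_S_g Y
      rwa [show (g Y : Equiv.Perm (Fin n)) = (g X : Equiv.Perm (Fin n)) from
        (congrArg Subtype.val h').symm] at this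
    have hXmem : X ∈ T (g X : Equiv.Perm (Fin n)) := mem_S_g X
    have hYmem : Y ∈ T (g X : Equiv.Perm (Fin n)) := hYX
    have hpre : IsPreconnected (T (g X : Equiv.Perm (Fin n))) :=
      isPreconnected_T (g X).2
    have hYc : Y ∈ connectedComponent X :=
      hpre.subset_connectedComponent hXmem hYmem
    exact Quotient.sound' (connectedComponent_eq hYc)
  · -- surjective
    rintro ⟨σ, hperm⟩
    set X : Fin n → ℝ := fun i => ((σ.symm i : ℕ) : ℝ) with hXdef
    have hs : X ∈ S σ := by
      intro i j hij
      simp only [Function.comp_apply, hXdef, Equiv.symm_apply_apply]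
      exact_mod_cast hij
    have hX : X ∈ W n := mem_W_iff.mpr ⟨σ, hperm, hs⟩
    refine ⟨ConnectedComponents.mk ⟨X, hX⟩, ?_⟩
    exact Subtype.ext (g_eq_of_mem_S ⟨X, hX⟩ hs)
  · -- the explicit description
    intro X σ hσ
    exact g_eq_of_mem_S X hσ
end
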